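/- Let Γ_A = 2^{R_A} - 1 for fixed rate R_A > 0, let γ_B > 0 be known, and set R_B = log2(1 + γ_B/(1+Γ_A)). Then for every realization γ_A ≥ 0 of the unknown interference SNR, the rates (R_A applied only when γ_A ≥ Γ_A, and R_B always) are compatible with decoding of R_B: if γ_A < Γ_A then R_B ≤ log2(1 + γ_B/(1+γ_A)) (decoding treating interference as noise), and if γ_A ≥ Γ_A then the two-user MAC constraints R_B ≤ log2(1+γ_B), R_A ≤ log2(1+γ_A), and R_A + R_B ≤ log2(1+γ_A+γ_B) all hold. Hence the downlink rate R_B = log2(1 + γ_B/(1+Γ_A)) is decodable with zero outage regardless of γ_A. -/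
import Mathlib


open Real

/-- With `Γ_A = 2^R_A - 1` for fixed rate `R_A > 0`, known `γ_B > 0`, and downlink rate
`R_B = logb 2 (1 + γ_B/(1+Γ_A))`, for every realization `γ_A ≥ 0`:
if `γ_A < Γ_A` then `R_B ≤ logb 2 (1 + γ_B / (1 + γ_A))` (decoding treating interference as noise),
and if `γ_A ≥ Γ_A` then the two-user MAC constraints `R_B ≤ logb 2 (1+γ_B)`,
`R_A ≤ logb 2 (1+γ_A)` and `R_A + R_B ≤ logb 2 (1+γ_A+γ_B)` all hold.
Hence `R_B` is decodable with zero outage regardless of `γ_A`. -/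
theorem underlay_zero_outage (R_A γ_B : ℝ) (hRA : 0 < R_A) (hγB : 0 < γ_B) :
    let Γ_A : ℝ := 2 ^ R_A - 1
    let R_B : ℝ := logb 2 (1 + γ_B / (1 + Γ_A))
    ∀ γ_A : ℝ, 0 ≤ γ_A →
      (γ_A < Γ_A → R_B ≤ logb 2 (1 + γ_B / (1 + γ_A))) ∧
      (Γ_A ≤ γ_A →
        R_B ≤ logb 2 (1 + γ_B) ∧
        R_A ≤ logb 2 (1 + γ_A) ∧
        R_A + R_B ≤ logb 2 (1 + γ_A + γ_B)) := by
  intro Γ_A R_B γ_A hγA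
  have h2 : (1:ℝ) < 2 ^ R_A := by
    have := Real.one_lt_rpow_iff_of_pos (x := 2) (by norm_num) (y := R_A)
    exact this.mpr (Or.inl ⟨by norm_num, hRA⟩)
  have hΓ : 0 < Γ_A := by simp only [Γ_A]; linarith
  have h1Γ : (0:ℝ) < 1 + Γ_A := by linarith
  have h1γ : (0:ℝ) < 1 + γ_A := by linarith
  have mono : ∀ x y : ℝ, 0 < x → x ≤ y → logb 2 x ≤ logb 2 y := fun x y hx hxy =>
    (Real.logb_le_logb (by norm_num) hx (lt_of_lt_of_le hx hxy)).mpr hxy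
  constructor
  · intro hlt
    apply mono _ _ (by positivity)
    have : γ_B / (1 + Γ_A) ≤ γ_B / (1 + γ_A) :=
      div_le_div_of_nonneg_left hγB.le h1γ (by linarith)
    linarith
  · intro hge
    have hdiv : γ_B / (1 + Γ_A) ≤ γ_B := by
      rw [div_le_iff₀ h1Γ]
      nlinarith
    have hdivpos : 0 < γ_B / (1 + Γ_A) := div_pos hγB h1Γ
    refine ⟨mono _ _ (by positivity) (by linarith), ?_, ?_⟩
    · have : R_A = logb 2 (1 + Γ_A) := by
        simp only [Γ_A]
        rw [show (1:ℝ) + (2 ^ R_A - 1) = 2 ^ R_A by ring, Real.logb_rpow (by norm_num) (by norm_num)]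
      rw [this]
      exact mono _ _ (by positivity) (by linarith)
    · have key : R_A + R_B = logb 2 (1 + Γ_A + γ_B) := by
        have hRAeq : R_A = logb 2 (1 + Γ_A) := by
          simp only [Γ_A]
          rw [show (1:ℝ) + (2 ^ R_A - 1) = 2 ^ R_A by ring, Real.logb_rpow (by norm_num) (by norm_num)]
        rw [hRAeq]
        rw [← Real.logb_mul (ne_of_gt h1Γ) (by positivity)]
        congr 1
        field_simp
      rw [key]
      exact mono _ _ (by positivity) (by linarith)
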